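/- arXiv:2603.24338 — 2 statements merged into one kernel-verified Lean document; each statement's English description precedes it below -/
import Mathlib

section
/- Let N, L be positive integers, M = L·N, x : Fin M → ℂ an input sequence, and g : Fin N → ℂ a gain-mismatch sequence. Define y : Fin M → ℂ by y_k = (1 + g_{k mod N}) · x_k. Then for every m with 0 ≤ m < M, the normalized M-point DFT of y satisfies ỹ_m = x̃_m + ∑_{p=0}^{N-1} g̃_p · x̃_{(m − L·p) mod M}, where x̃ is the normalized M-point DFT of x and g̃ is the normalized N-point DFT of g. -/
open Complex Finset

/-!
Expanding `g (n mod N)` by DFT inversion, `g (n mod N) = ∑ p, ĝ p ζ_N^(p n)`, and using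
`ζ_N = ζ_M^L` for `M = L N`, the output `y` is `x` plus the combination `∑ p, ĝ p ζ_M^(L p n) x n`
of modulated copies of `x`. The DFT is linear, modulation by `ζ_M^(s n)` shifts the spectrum by
`s` bins, and the DFT is `M`-periodic in the frequency, which accounts for the reduction mod `M`.
-/

/-- The normalized `M`-point DFT of `u : Fin M → ℂ`, evaluated at an integer
frequency index `k` (it is `M`-periodic in `k`). -/
noncomputable def dft (M : ℕ) (u : Fin M → ℂ) (k : ℤ) : ℂ :=
  (1 / (M : ℂ)) *
    ∑ n : Fin M,
      Complex.exp (-2 * Real.pi * Complex.I * (k : ℂ) * ((n : ℕ) : ℂ) / (M : ℂ)) * u n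

noncomputable def unitRoot (M : ℕ) : ℂ := exp (2 * Real.pi * I / M)

lemma unitRoot_ne_zero (M : ℕ) : unitRoot M ≠ 0 := exp_ne_zero _

lemma isPrimitiveRoot_unitRoot {M : ℕ} (hM : M ≠ 0) : IsPrimitiveRoot (unitRoot M) M :=
  isPrimitiveRoot_exp M hM

lemma unitRoot_pow_self (M : ℕ) : unitRoot M ^ M = 1 := by
  rcases eq_or_ne M 0 with rfl | hM
  · exact pow_zero _
  · exact (isPrimitiveRoot_unitRoot hM).pow_eq_one

lemma unitRoot_mul_pow_left {L : ℕ} (hL : L ≠ 0) (N : ℕ) : unitRoot (L * N) ^ L = unitRoot N := by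
  have hL' : (L : ℂ) ≠ 0 := Nat.cast_ne_zero.mpr hL
  rw [unitRoot, unitRoot, ← exp_nat_mul]
  congr 1
  push_cast
  field_simp

lemma dft_eq_sum_zpow (M : ℕ) (u : Fin M → ℂ) (k : ℤ) :
    dft M u k = (1 / (M : ℂ)) * ∑ n : Fin M, unitRoot M ^ (-(k * n)) * u n := by
  unfold dft unitRoot
  congr 1
  refine sum_congr rfl fun n _ => ?_
  rw [← exp_int_mul]
  congr 2
  push_cast
  ring

noncomputable def dftLinearMap (M : ℕ) (k : ℤ) : (Fin M → ℂ) →ₗ[ℂ] ℂ where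
  toFun u := dft M u k
  map_add' u v := by
    simp only [dft, Pi.add_apply, mul_add, sum_add_distrib]
  map_smul' c u := by
    simp only [dft, Pi.smul_apply, smul_eq_mul, RingHom.id_apply, mul_sum]
    exact sum_congr rfl fun n _ => by ring

@[simp] lemma dftLinearMap_apply (M : ℕ) (k : ℤ) (u : Fin M → ℂ) :
    dftLinearMap M k u = dft M u k := rfl

lemma dft_emod (M : ℕ) (u : Fin M → ℂ) (k : ℤ) : dft M u (k % M) = dft M u k := by
  simp only [dft_eq_sum_zpow]
  congr 1
  refine sum_congr rfl fun n _ => ?_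
  rw [Int.emod_def, show -((k - M * (k / M)) * n) = -(k * n) + M * ((k / M) * n) by ring,
    zpow_add₀ (unitRoot_ne_zero M), zpow_mul, zpow_natCast, unitRoot_pow_self, one_zpow, mul_one]

lemma dft_modulate (M : ℕ) (u : Fin M → ℂ) (s k : ℤ) :
    dft M (fun n => unitRoot M ^ (s * n) * u n) k = dft M u (k - s) := by
  simp only [dft_eq_sum_zpow]
  congr 1
  refine sum_congr rfl fun n _ => ?_
  rw [← mul_assoc, ← zpow_add₀ (unitRoot_ne_zero M)]
  congr 2
  ring

lemma IsPrimitiveRoot.sum_range_zpow_pow {K : Type*} [Field K] {ζ : K} {N : ℕ}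
    (hζ : IsPrimitiveRoot ζ N) (d : ℤ) :
    ∑ p ∈ range N, (ζ ^ d) ^ p = if (N : ℤ) ∣ d then (N : K) else 0 := by
  split_ifs with hd
  · simp [(hζ.zpow_eq_one_iff_dvd d).mpr hd]
  · have hpow : (ζ ^ d) ^ N = 1 := by
      rw [← zpow_natCast, ← zpow_mul, mul_comm, zpow_mul, hζ.zpow_eq_one, one_zpow]
    rw [geom_sum_eq (mt (hζ.zpow_eq_one_iff_dvd d).mp hd), hpow, sub_self, zero_div]

lemma intCast_dvd_sub_iff_eq_mod {N : ℕ} (hN : 0 < N) (n : ℕ) (j : Fin N) :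
    (N : ℤ) ∣ n - (j : ℕ) ↔ j = ⟨n % N, Nat.mod_lt _ hN⟩ := by
  rw [← Nat.modEq_iff_dvd, Nat.ModEq, Nat.mod_eq_of_lt j.isLt, Fin.ext_iff]

lemma sum_dft_mul_zpow {N : ℕ} (hN : 0 < N) (g : Fin N → ℂ) (n : ℕ) :
    ∑ p ∈ range N, dft N g p * unitRoot N ^ ((p : ℤ) * n) = g ⟨n % N, Nat.mod_lt _ hN⟩ := by
  have hζ := isPrimitiveRoot_unitRoot hN.ne'
  calc ∑ p ∈ range N, dft N g p * unitRoot N ^ ((p : ℤ) * n)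
      = (1 / (N : ℂ)) * ∑ j : Fin N, g j * ∑ p ∈ range N, (unitRoot N ^ ((n : ℤ) - (j : ℕ))) ^ p := by
        simp only [dft_eq_sum_zpow, mul_sum, sum_mul]
        rw [sum_comm]
        refine sum_congr rfl fun j _ => sum_congr rfl fun p _ => ?_
        rw [← zpow_natCast, ← zpow_mul, sub_mul, zpow_sub₀ (unitRoot_ne_zero N), zpow_neg,
          mul_comm (n : ℤ), mul_comm ((j : ℕ) : ℤ)]
        ring
    _ = (1 / (N : ℂ)) * ∑ j : Fin N, if j = ⟨n % N, Nat.mod_lt _ hN⟩ then g j * N else 0 := by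
        simp only [hζ.sum_range_zpow_pow, intCast_dvd_sub_iff_eq_mod hN, mul_ite, mul_zero]
    _ = g ⟨n % N, Nat.mod_lt _ hN⟩ := by
        rw [sum_ite_eq', if_pos (mem_univ _), one_div_mul_eq_div, mul_div_cancel_right₀]
        exact Nat.cast_ne_zero.mpr hN.ne'

/-- Gain mismatches `g` among the `N` sub-ADCs create replicas of the input
spectrum, shifted by multiples of `f_s/N` (`L` bins), with amplitudes given by
the `N`-point DFT of the mismatch sequence. -/
theorem dft_gain_mismatch (N L : ℕ) (hN : 0 < N) (hL : 0 < L)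
    (M : ℕ) (hM : M = L * N) (x : Fin M → ℂ) (g : Fin N → ℂ)
    (y : Fin M → ℂ)
    (hy : ∀ k : Fin M, y k = (1 + g ⟨(k : ℕ) % N, Nat.mod_lt _ hN⟩) * x k) :
    ∀ m : ℕ, m < M →
      dft M y m =
        dft M x m +
          ∑ p ∈ Finset.range N,
            dft N g p * dft M x (((m : ℤ) - (L : ℤ) * (p : ℤ)) % (M : ℤ)) := by
  intro m _
  subst hM
  have hg : ∀ n : ℕ, g ⟨n % N, Nat.mod_lt _ hN⟩ =
      ∑ p ∈ range N, dft N g p * unitRoot (L * N) ^ ((L : ℤ) * p * n) := by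
    intro n
    rw [← sum_dft_mul_zpow hN g n, ← unitRoot_mul_pow_left hL.ne' N]
    simp only [← zpow_natCast (unitRoot (L * N)) L, ← zpow_mul, mul_assoc]
  have hy_modulated : y = x + ∑ p ∈ range N,
      dft N g p • fun n : Fin (L * N) => unitRoot (L * N) ^ ((L : ℤ) * p * n) * x n := by
    funext n
    simp only [hy n, hg, Pi.add_apply, Finset.sum_apply, Pi.smul_apply, smul_eq_mul, add_mul,
      one_mul, sum_mul, mul_assoc]
  rw [hy_modulated, ← dftLinearMap_apply, map_add, map_sum]
  simp only [map_smul, dftLinearMap_apply, smul_eq_mul, dft_modulate, dft_emod]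
end

section
/- Let N be a positive integer, σ > 0, and let x_0, …, x_{N-1} be mutually independent real random variables on a probability space, each with law gaussianReal 0 σ². Let k be an integer with 0 < k < N such that N does not divide 2k. Then the random variable (1/N) ∑_{n=0}^{N-1} cos(2π·k·n/N)·x_n has law gaussianReal 0 (σ²/(2N)), and likewise the random variable (1/N) ∑_{n=0}^{N-1} sin(2π·k·n/N)·x_n has law gaussianReal 0 (σ²/(2N)). -/
open MeasureTheory ProbabilityTheory Finset
open scoped NNReal

open Real

/-! A linear combination `∑ cₙ xₙ` of independent `N(0, σ²)` variables is `N(0, σ² ∑ cₙ²)`, so it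
suffices that `∑ₙ cos²(2πkn/N) = ∑ₙ sin²(2πkn/N) = N/2`. By `cos² = (1 + cos 2·)/2` this reduces
to `∑ₙ cos(2π·2k·n/N) = 0`, the real part of the geometric sum of the `N`-th root of unity
`e^{2πi·2k/N}`, which differs from `1` exactly because `N ∤ 2k`. -/

section GaussianSum

variable {Ω ι : Type*} {mΩ : MeasurableSpace Ω} {μ : Measure Ω} [IsProbabilityMeasure μ]
  {X : ι → Ω → ℝ} {m : ι → ℝ} {v : ι → ℝ≥0}

lemma map_finsetSum_eq_gaussianReal (hX : iIndepFun X μ)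
    (hlaw : ∀ i, μ.map (X i) = gaussianReal (m i) (v i)) (s : Finset ι) :
    μ.map (∑ i ∈ s, X i) = gaussianReal (∑ i ∈ s, m i) (∑ i ∈ s, v i) := by
  classical
  induction s using Finset.induction_on with
  | empty => simp [Pi.zero_def, Measure.map_const, gaussianReal_zero_var]
  | insert i s hi ih =>
    have hmeas : ∀ j, AEMeasurable (X j) μ :=
      fun j ↦ AEMeasurable.of_map_ne_zero (by simp [hlaw j, NeZero.ne])
    rw [sum_insert hi, sum_insert hi, sum_insert hi, add_comm (X i), add_comm (m i),
      add_comm (v i)]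
    exact gaussianReal_add_gaussianReal_of_indepFun
      (hX.indepFun_finsetSum_of_notMem₀ hmeas hi) ih (hlaw i)

lemma map_sum_mul_eq_gaussianReal [Fintype ι] (hX : iIndepFun X μ)
    (hlaw : ∀ i, μ.map (X i) = gaussianReal (m i) (v i)) (c : ι → ℝ) :
    μ.map (fun ω ↦ ∑ i, c i * X i ω) =
      gaussianReal (∑ i, c i * m i) (∑ i, .mk (c i ^ 2) (sq_nonneg _) * v i) := by
  have hlaw' (i : ι) : μ.map (fun ω ↦ c i * X i ω) =
      gaussianReal (c i * m i) (.mk (c i ^ 2) (sq_nonneg _) * v i) := by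
    change μ.map ((c i * ·) ∘ X i) = _
    rw [← AEMeasurable.map_map_of_aemeasurable (measurable_const_mul _).aemeasurable
        (AEMeasurable.of_map_ne_zero (by simp [hlaw i, NeZero.ne])), hlaw i,
      gaussianReal_map_const_mul]
  convert map_finsetSum_eq_gaussianReal
    (hX.comp (fun i t ↦ c i * t) fun i ↦ measurable_const_mul _) hlaw' univ using 2
  ext ω
  simp [Finset.sum_apply]

end GaussianSum

lemma sum_range_cos_eq_zero {N : ℕ} (hN : 0 < N) {m : ℤ} (hm : ¬ (N : ℤ) ∣ m) :
    ∑ n ∈ range N, cos (2 * π * m * n / N) = 0 := by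
  have hζ := Complex.isPrimitiveRoot_exp N hN.ne'
  set r := Complex.exp (2 * π * Complex.I / N) ^ m
  have hr : r ≠ 1 := by rwa [Ne, hζ.zpow_eq_one_iff_dvd]
  have hrN : r ^ N = 1 := by
    rw [← zpow_natCast, ← zpow_mul, hζ.zpow_eq_one_iff_dvd]
    exact dvd_mul_left _ _
  have hcos (n : ℕ) : cos (2 * π * m * n / N) = (r ^ n).re := by
    rw [← zpow_natCast, ← zpow_mul, ← Complex.exp_int_mul]
    push_cast
    rw [← Complex.exp_ofReal_mul_I_re]
    push_cast
    ring_nf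
  simp_rw [hcos, ← Complex.re_sum, geom_sum_eq hr, hrN, sub_self, zero_div, Complex.zero_re]

lemma sum_range_cos_sq {N : ℕ} (hN : 0 < N) {k : ℤ} (hk : ¬ (N : ℤ) ∣ 2 * k) :
    ∑ n ∈ range N, cos (2 * π * k * n / N) ^ 2 = N / 2 := by
  have h := sum_range_cos_eq_zero hN hk
  have hcos (n : ℕ) :
      cos (2 * π * k * n / N) ^ 2 = 1 / 2 + cos (2 * π * ↑(2 * k) * n / N) / 2 := by
    rw [cos_sq]
    push_cast
    ring_nf
  simp_rw [hcos, sum_add_distrib, ← sum_div, h]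
  simp

lemma sum_range_sin_sq {N : ℕ} (hN : 0 < N) {k : ℤ} (hk : ¬ (N : ℤ) ∣ 2 * k) :
    ∑ n ∈ range N, sin (2 * π * k * n / N) ^ 2 = N / 2 := by
  simp_rw [sin_sq, sum_sub_distrib, sum_range_cos_sq hN hk, sum_const, card_range, nsmul_eq_mul,
    mul_one]
  ring

theorem dft_bin_real_imag_gaussian_general
    {Ω : Type*} [MeasurableSpace Ω] (μ : Measure Ω) [IsProbabilityMeasure μ]
    (N : ℕ) (hN : 0 < N) (σ : ℝ≥0)
    (x : Fin N → Ω → ℝ)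
    (hindep : iIndepFun x μ)
    (hlaw : ∀ n, Measure.map (x n) μ = gaussianReal 0 (σ ^ 2))
    (k : ℤ) (hk2 : ¬ ((N : ℤ) ∣ 2 * k)) :
    Measure.map
        (fun ω => (1 / (N : ℝ)) *
          ∑ n : Fin N, Real.cos (2 * Real.pi * (k : ℝ) * ((n : ℕ) : ℝ) / (N : ℝ)) * x n ω) μ =
      gaussianReal 0 (σ ^ 2 / (2 * N)) ∧
    Measure.map
        (fun ω => (1 / (N : ℝ)) *
          ∑ n : Fin N, Real.sin (2 * Real.pi * (k : ℝ) * ((n : ℕ) : ℝ) / (N : ℝ)) * x n ω) μ =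
      gaussianReal 0 (σ ^ 2 / (2 * N)) := by
  have hN₀ : (N : ℝ) ≠ 0 := by positivity
  have key (c : ℕ → ℝ) (hc : ∑ n ∈ range N, c n ^ 2 = N / 2) :
      μ.map (fun ω ↦ (1 / (N : ℝ)) * ∑ n : Fin N, c n * x n ω) =
        gaussianReal 0 (σ ^ 2 / (2 * N)) := by
    simp_rw [mul_sum, ← mul_assoc]
    rw [map_sum_mul_eq_gaussianReal hindep hlaw]
    simp only [mul_zero, sum_const_zero]
    congr 1
    ext
    push_cast
    rw [← sum_mul, Fin.sum_univ_eq_sum_range (fun n ↦ (1 / (N : ℝ) * c n) ^ 2)]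
    simp_rw [mul_pow, ← mul_sum, hc]
    field_simp
  exact ⟨key _ (sum_range_cos_sq hN hk2), key _ (sum_range_sin_sq hN hk2)⟩

/-- For an i.i.d. `N(0,σ²)` sequence of length `N` and a non-DC, non-Nyquist
bin index `k` (i.e. `0 < k < N` with `N ∤ 2k`), the real part
`(1/N) ∑_n cos(2πkn/N)·x_n` and minus the imaginary part
`(1/N) ∑_n sin(2πkn/N)·x_n` of the `k`-th normalized DFT bin are each Gaussian
with mean `0` and variance `σ²/(2N)`. -/
theorem dft_bin_real_imag_gaussian
    {Ω : Type*} [MeasurableSpace Ω] (μ : Measure Ω) [IsProbabilityMeasure μ]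
    (N : ℕ) (hN : 0 < N) (σ : ℝ≥0) (hσ : 0 < σ)
    (x : Fin N → Ω → ℝ)
    (hmeas : ∀ n, Measurable (x n))
    (hindep : iIndepFun x μ)
    (hlaw : ∀ n, Measure.map (x n) μ = gaussianReal 0 (σ ^ 2))
    (k : ℤ) (hk0 : 0 < k) (hkN : k < N) (hk2 : ¬ ((N : ℤ) ∣ 2 * k)) :
    Measure.map
        (fun ω => (1 / (N : ℝ)) *
          ∑ n : Fin N, Real.cos (2 * Real.pi * (k : ℝ) * ((n : ℕ) : ℝ) / (N : ℝ)) * x n ω) μ =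
      gaussianReal 0 (σ ^ 2 / (2 * N)) ∧
    Measure.map
        (fun ω => (1 / (N : ℝ)) *
          ∑ n : Fin N, Real.sin (2 * Real.pi * (k : ℝ) * ((n : ℕ) : ℝ) / (N : ℝ)) * x n ω) μ =
      gaussianReal 0 (σ ^ 2 / (2 * N)) :=
  dft_bin_real_imag_gaussian_general μ N hN σ x hindep hlaw k hk2
end
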